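/- arXiv:1910.00308 — 3 statements merged into one kernel-verified Lean document; each statement's English description precedes it below -/
import Mathlib

section
/- Let n be a positive integer, x and p probabilities with 0 < p < x < 1 such that x·n is an integer, and let Y ~ Bin(n,p). Then 2^{-Dkl(x‖p)·n}/√(8·n·x·(1-x)) ≤ P[Y ≥ xn] ≤ ((1-p)·√x)/((x-p)·√(π·(1-x))) · 2^{-Dkl(x‖p)·n}/√n. -/
/-- Binary Kullback–Leibler divergence between Bernoulli distributions
(`Real.logb 2 0 = 0`, so the convention `0·log 0 = 0` holds). -/
noncomputable def dkl (x p : ℝ) : ℝ :=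
  x * Real.logb 2 (x / p) + (1 - x) * Real.logb 2 ((1 - x) / (1 - p))

/-- `P[Y ≤ t]` for a binomial random variable `Y ~ Bin(n,p)`. -/
noncomputable def binomPLE (n : ℕ) (p t : ℝ) : ℝ :=
  ∑ k ∈ Finset.range (n + 1),
    if (k : ℝ) ≤ t then (n.choose k : ℝ) * p ^ k * (1 - p) ^ (n - k) else 0

/-- `P[Y ≥ t]` for a binomial random variable `Y ~ Bin(n,p)`. -/
noncomputable def binomPGE (n : ℕ) (p t : ℝ) : ℝ :=
  ∑ k ∈ Finset.range (n + 1),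
    if t ≤ (k : ℝ) then (n.choose k : ℝ) * p ^ k * (1 - p) ^ (n - k) else 0

/-!
With `k = x n`, the term `C(n,k) pᵏ (1-p)ⁿ⁻ᵏ` of `P[Y ≥ k]` equals `2^{-Dkl(x‖p) n}` times the
mode probability `C(n,k) xᵏ (1-x)ⁿ⁻ᵏ`. The lower bound keeps only this term. For the upper bound,
consecutive terms beyond `k` shrink by a factor at most `r = p(n-k)/((1-p)k) < 1`, so the tail is at
most `1/(1-r) = (1-p)x/(x-p)` times its first term.

The mode probability is `σₙ/(σₖσₙ₋ₖ) / √(2nx(1-x))` for the Stirling sequence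
`σₘ = m!/(√(2m)(m/e)ᵐ)`, which decreases from `σ₁ = e/√2` to `√π`. Hence
`σₙ/(σₖσₙ₋ₖ) ≤ σ₁/π ≤ √(2/π)`, and `σₙ/(σₖσₙ₋ₖ) ≥ √π/σ₂² ≥ 1/2` when `k, n - k ≥ 2`. For `k = 1`
(or symmetrically `n - k = 1`) the bound `1/2` is attained at `n = 2`, and for `n ≥ 3` it follows from Robbins' estimate
`σⱼ₊₁ ≥ e^{-1/(12j(j+1))} σⱼ`.
-/

open Real Finset Stirling
open scoped Nat

theorem seven_div_four_le_sqrt_pi : 7 / 4 ≤ √π := by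
  rw [le_sqrt (by norm_num) pi_pos.le]
  linarith [pi_gt_d2]

namespace Stirling

theorem stirlingSeq_pos {n : ℕ} (hn : n ≠ 0) : 0 < stirlingSeq n :=
  (sqrt_pos.2 pi_pos).trans_le (sqrt_pi_le_stirlingSeq hn)

theorem factorial_eq_stirlingSeq_mul {n : ℕ} (hn : n ≠ 0) :
    (n ! : ℝ) = stirlingSeq n * (√(2 * n) * (n / exp 1) ^ n) := by
  rw [stirlingSeq, div_mul_cancel₀]
  positivity

theorem stirlingSeq_le_of_le {m n : ℕ} (hm : m ≠ 0) (h : m ≤ n) :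
    stirlingSeq n ≤ stirlingSeq m := by
  obtain ⟨m, rfl⟩ := Nat.exists_eq_succ_of_ne_zero hm
  obtain ⟨n, rfl⟩ : ∃ n', n = n' + 1 := ⟨n - 1, by omega⟩
  exact stirlingSeq'_antitone (by omega : m ≤ n)

theorem stirlingSeq_two : stirlingSeq 2 = exp 1 ^ 2 / 4 := by
  have h : √(2 * (2 : ℕ) : ℝ) = 2 := by
    rw [show (2 * (2 : ℕ) : ℝ) = 2 ^ 2 by norm_num, sqrt_sq zero_le_two]
  rw [stirlingSeq, h]
  field_simp
  norm_num [Nat.factorial]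

theorem stirlingSeq_mul_le_succ {j : ℕ} (hj : 2 ≤ j) :
    stirlingSeq j * (71 / 72) ≤ stirlingSeq (j + 1) := by
  have hj0 : 0 < stirlingSeq j := stirlingSeq_pos (by omega)
  have hj1 : 0 < stirlingSeq (j + 1) := stirlingSeq_pos (by omega)
  have robbins : log (stirlingSeq j) - log (stirlingSeq (j + 1)) ≤ 1 / 72 := by
    refine (log_stirlingSeq_sdiff_le j).trans ?_
    rw [div_le_div_iff_of_pos_left one_pos (by positivity) (by norm_num)]
    have : (2 : ℝ) ≤ j := by exact_mod_cast hj
    nlinarith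
  have hexp : exp (-(1 / 72)) ≤ stirlingSeq (j + 1) / stirlingSeq j := by
    rw [← exp_log (div_pos hj1 hj0), log_div hj1.ne' hj0.ne']
    gcongr
    linarith
  rw [le_div_iff₀ hj0] at hexp
  nlinarith [add_one_le_exp (-(1 / 72 : ℝ))]

theorem stirlingSeq_add_le_mul {k j : ℕ} (hk : k ≠ 0) (hj : j ≠ 0) :
    stirlingSeq (k + j) ≤ √(2 / π) * (stirlingSeq k * stirlingSeq j) := by
  have hπ : π ≤ stirlingSeq k * stirlingSeq j := by
    rw [← mul_self_sqrt pi_pos.le]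
    exact mul_le_mul (sqrt_pi_le_stirlingSeq hk) (sqrt_pi_le_stirlingSeq hj) (by positivity)
      (stirlingSeq_pos hk).le
  have he : exp 1 / √2 ≤ √(2 / π) * π := by
    have : √(2 / π) * π = √2 * √π := by
      rw [sqrt_div' _ pi_pos.le, ← mul_self_sqrt pi_pos.le, sqrt_mul_self (sqrt_nonneg _)]
      field_simp
    rw [this, div_le_iff₀ (by positivity), mul_comm, ← mul_assoc, mul_self_sqrt zero_le_two]
    linarith [exp_one_lt_d9, seven_div_four_le_sqrt_pi]
  calc stirlingSeq (k + j) ≤ stirlingSeq 1 := stirlingSeq_le_of_le one_ne_zero (by omega)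
    _ = exp 1 / √2 := stirlingSeq_one
    _ ≤ √(2 / π) * π := he
    _ ≤ _ := by gcongr

theorem stirlingSeq_one_mul_le {j : ℕ} (hj : j ≠ 0) :
    stirlingSeq 1 * stirlingSeq j ≤ 2 * stirlingSeq (1 + j) := by
  rcases eq_or_ne j 1 with rfl | hj1
  · rw [stirlingSeq_one, stirlingSeq_two, _root_.div_mul_div_comm, mul_self_sqrt zero_le_two]
    exact le_of_eq (by ring)
  have h2 : 7 / 5 ≤ √2 := by
    rw [le_sqrt (by norm_num) (by norm_num)]
    norm_num
  have he : exp 1 / √2 ≤ 2 * (71 / 72) := by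
    rw [div_le_iff₀ (by positivity)]
    nlinarith [exp_one_lt_d9]
  rw [stirlingSeq_one, add_comm]
  calc exp 1 / √2 * stirlingSeq j ≤ 2 * (71 / 72) * stirlingSeq j := by
        gcongr; exact (stirlingSeq_pos hj).le
    _ ≤ 2 * stirlingSeq (j + 1) := by linarith [stirlingSeq_mul_le_succ (by omega : 2 ≤ j)]

theorem stirlingSeq_mul_le_two_mul {k j : ℕ} (hk : k ≠ 0) (hj : j ≠ 0) :
    stirlingSeq k * stirlingSeq j ≤ 2 * stirlingSeq (k + j) := by
  rcases eq_or_ne k 1 with rfl | hk1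
  · exact stirlingSeq_one_mul_le hj
  rcases eq_or_ne j 1 with rfl | hj1
  · rw [mul_comm, add_comm]
    exact stirlingSeq_one_mul_le hk
  have h2 : ∀ {m : ℕ}, m ≠ 0 → m ≠ 1 → stirlingSeq m ≤ exp 1 ^ 2 / 4 := fun hm hm1 =>
    stirlingSeq_two ▸ stirlingSeq_le_of_le two_ne_zero (by omega)
  have he : (exp 1 ^ 2 / 4) * (exp 1 ^ 2 / 4) ≤ 2 * √π := by
    have : exp 1 ^ 4 ≤ 2.7182818286 ^ 4 := by gcongr; exact exp_one_lt_d9.le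
    nlinarith [seven_div_four_le_sqrt_pi]
  calc stirlingSeq k * stirlingSeq j ≤ (exp 1 ^ 2 / 4) * (exp 1 ^ 2 / 4) :=
        mul_le_mul (h2 hk hk1) (h2 hj hj1) (stirlingSeq_pos hj).le (by positivity)
    _ ≤ 2 * √π := he
    _ ≤ _ := by gcongr; exact sqrt_pi_le_stirlingSeq (by omega)

end Stirling

noncomputable def binomProb (n : ℕ) (p : ℝ) (i : ℕ) : ℝ :=
  n.choose i * p ^ i * (1 - p) ^ (n - i)

theorem binomProb_nonneg (n : ℕ) {p : ℝ} (hp0 : 0 ≤ p) (hp1 : p ≤ 1) (i : ℕ) :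
    0 ≤ binomProb n p i := by
  have : 0 ≤ 1 - p := by linarith
  unfold binomProb
  positivity

theorem binomPGE_natCast_eq_sum {n k : ℕ} (p : ℝ) (hkn : k ≤ n) :
    binomPGE n p k = ∑ t ∈ range (n - k + 1), binomProb n p (k + t) := by
  simp only [binomPGE, Nat.cast_le, ← sum_filter]
  rw [show (range (n + 1)).filter (k ≤ ·) = Ico k (n + 1) by ext; simp; omega,
    sum_Ico_eq_sum_range, show n + 1 - k = n - k + 1 by omega]
  rfl

theorem binomProb_le_binomPGE {n k : ℕ} {p : ℝ} (hp0 : 0 ≤ p) (hp1 : p ≤ 1) (hkn : k ≤ n) :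
    binomProb n p k ≤ binomPGE n p k := by
  rw [binomPGE_natCast_eq_sum p hkn]
  simpa using single_le_sum (fun t _ => binomProb_nonneg n hp0 hp1 (k + t))
    (mem_range.2 (Nat.succ_pos (n - k)))

theorem binomProb_succ_mul (n : ℕ) (p : ℝ) {i : ℕ} (hi : i < n) :
    binomProb n p (i + 1) * ((i + 1) * (1 - p)) = binomProb n p i * ((n - i) * p) := by
  obtain ⟨m, rfl⟩ := Nat.exists_eq_add_of_lt hi
  have hC := Nat.choose_succ_right_eq (i + m + 1) i
  rw [show i + m + 1 - i = m + 1 by omega] at hC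
  have hC' : ((i + m + 1).choose (i + 1) : ℝ) * (i + 1) = (i + m + 1).choose i * (m + 1) := by
    exact_mod_cast hC
  simp only [binomProb, show i + m + 1 - (i + 1) = m by omega, show i + m + 1 - i = m + 1 by omega]
  push_cast
  linear_combination p ^ (i + 1) * (1 - p) ^ (m + 1) * hC'

theorem binomProb_succ_le_mul {n k i : ℕ} {p : ℝ} (hp0 : 0 ≤ p) (hp1 : p < 1) (hk : 0 < k)
    (hki : k ≤ i) (hi : i < n) :
    binomProb n p (i + 1) ≤ p * (n - k) / ((1 - p) * k) * binomProb n p i := by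
  have hb := binomProb_nonneg n hp0 hp1.le i
  have hk' : (0 : ℝ) < k := by exact_mod_cast hk
  have hki' : (k : ℝ) ≤ i := by exact_mod_cast hki
  have hin : (i : ℝ) < n := by exact_mod_cast hi
  have hq : 0 < 1 - p := by linarith
  rw [div_mul_eq_mul_div, le_div_iff₀ (by positivity),
    ← mul_le_mul_iff_of_pos_right (by positivity : (0 : ℝ) < i + 1)]
  calc binomProb n p (i + 1) * ((1 - p) * k) * (i + 1)
      = binomProb n p i * ((n - i) * p) * k := by rw [← binomProb_succ_mul n p hi]; ring
    _ ≤ p * (n - k) * binomProb n p i * (i + 1) := by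
      have : ((n : ℝ) - i) * k ≤ (n - k) * (i + 1) := by nlinarith
      have := mul_le_mul_of_nonneg_left this (mul_nonneg hb hp0)
      linarith

theorem one_sub_mul_sum_range_le {f : ℕ → ℝ} {r : ℝ} {m : ℕ} (hr : 0 ≤ r) (hm : 0 ≤ f m)
    (hf : ∀ t < m, f (t + 1) ≤ r * f t) :
    (1 - r) * ∑ t ∈ range (m + 1), f t ≤ f 0 := by
  have hshift : ∑ t ∈ range m, f (t + 1) ≤ r * ∑ t ∈ range m, f t := by
    rw [mul_sum]
    exact sum_le_sum fun t ht => hf t (mem_range.1 ht)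
  have h1 := sum_range_succ' f m
  have h2 := sum_range_succ f m
  nlinarith

theorem binomPGE_le {n k : ℕ} {p : ℝ} (hp0 : 0 ≤ p) (hp1 : p < 1) (hpk : p * n < k)
    (hkn : k ≤ n) :
    binomPGE n p k ≤ (1 - p) * k / (k - p * n) * binomProb n p k := by
  have hk' : (0 : ℝ) < k := lt_of_le_of_lt (by positivity) hpk
  have hk : 0 < k := by exact_mod_cast hk'
  have hq : 0 < 1 - p := by linarith
  set r := p * (n - k) / ((1 - p) * k)
  have hr : 1 - r = (k - p * n) / ((1 - p) * k) := by
    simp only [r]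
    field_simp
    ring
  have hr0 : 0 ≤ r := by
    have : (k : ℝ) ≤ n := by exact_mod_cast hkn
    have : 0 ≤ (n : ℝ) - k := by linarith
    positivity
  have htel := one_sub_mul_sum_range_le (f := fun t => binomProb n p (k + t)) (m := n - k) hr0
    (binomProb_nonneg n hp0 hp1.le _)
    fun t ht => binomProb_succ_le_mul (i := k + t) hp0 hp1 hk (Nat.le_add_right k t) (by omega)
  rw [hr, div_mul_eq_mul_div, div_le_iff₀ (by positivity)] at htel
  rw [binomPGE_natCast_eq_sum p hkn, div_mul_eq_mul_div, le_div_iff₀ (by linarith)]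
  simp only [add_zero] at htel
  linarith

theorem two_rpow_neg_dkl_mul {n k : ℕ} {x p : ℝ} (hp0 : 0 < p) (hp1 : p < 1) (hx0 : 0 < x)
    (hx1 : x < 1) (hk : (k : ℝ) = x * n) (hkn : k ≤ n) :
    (2 : ℝ) ^ (-dkl x p * n) = (p / x) ^ k * ((1 - p) / (1 - x)) ^ (n - k) := by
  have hnk : ((n - k : ℕ) : ℝ) = (1 - x) * n := by rw [Nat.cast_sub hkn, hk]; ring
  have hexp : -dkl x p * n = logb 2 (p / x) * k + logb 2 ((1 - p) / (1 - x)) * (n - k : ℕ) := by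
    rw [dkl, ← inv_div p, ← inv_div (1 - p), logb_inv, logb_inv, hk, hnk]
    ring
  have hq : 0 < 1 - p := by linarith
  have hy : 0 < 1 - x := by linarith
  rw [hexp, rpow_add two_pos, rpow_mul zero_le_two, rpow_mul zero_le_two,
    rpow_logb two_pos (by norm_num) (by positivity),
    rpow_logb two_pos (by norm_num) (by positivity), rpow_natCast, rpow_natCast]

theorem binomProb_eq_two_rpow_neg_dkl_mul {n k : ℕ} {x p : ℝ} (hp0 : 0 < p) (hp1 : p < 1)
    (hx0 : 0 < x) (hx1 : x < 1) (hk : (k : ℝ) = x * n) (hkn : k ≤ n) :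
    binomProb n p k = (2 : ℝ) ^ (-dkl x p * n) * binomProb n x k := by
  have : 0 < 1 - x := by linarith
  rw [two_rpow_neg_dkl_mul hp0 hp1 hx0 hx1 hk hkn, binomProb, binomProb, div_pow, div_pow]
  field_simp

theorem binomProb_self_eq {n k : ℕ} {x : ℝ} (hk0 : 0 < k) (hkn : k < n) (hx : (k : ℝ) = x * n) :
    binomProb n x k =
      stirlingSeq n / (stirlingSeq k * stirlingSeq (n - k)) / √(2 * n * x * (1 - x)) := by
  obtain ⟨m, rfl⟩ := Nat.exists_eq_add_of_le hkn.le
  have hm : m ≠ 0 := by omega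
  have hcast : (k + m : ℕ) = (k : ℝ) + m := by push_cast; ring
  have hx' : x = k / (k + m) := by rw [← hcast, hx]; field_simp
  have hn0 : (0 : ℝ) < k + m := by positivity
  rw [binomProb, Nat.add_sub_cancel_left, hx']
  have hsq : √(2 * ((k + m : ℕ) : ℝ) * (k / (k + m)) * (1 - k / (k + m))) =
      √(2 * k) * √(2 * m) / √(2 * (k + m : ℕ)) := by
    rw [← sqrt_mul (by positivity), ← sqrt_div (by positivity)]
    congr 1
    rw [hcast]
    field_simp
    ring
  have hC : ((k + m).choose k : ℝ) * k ! * m ! = (k + m) ! := by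
    have := Nat.choose_mul_factorial_mul_factorial (Nat.le_add_right k m)
    rw [Nat.add_sub_cancel_left] at this
    exact_mod_cast this
  rw [factorial_eq_stirlingSeq_mul hk0.ne', factorial_eq_stirlingSeq_mul hm,
    factorial_eq_stirlingSeq_mul (by omega)] at hC
  have hS : 0 < √(2 * ((k + m : ℕ) : ℝ)) * (((k + m : ℕ) : ℝ) / exp 1) ^ (k + m) := by positivity
  have h1 : 1 - (k : ℝ) / (k + m) = m / (k + m) := by field_simp; ring
  rw [hsq, eq_div_of_mul_eq hS.ne' hC.symm, hcast, h1, pow_add]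
  simp only [div_pow]
  have := stirlingSeq_pos hk0.ne'
  have := stirlingSeq_pos hm
  field_simp

theorem binomProb_self_le {n k : ℕ} {x : ℝ} (hk0 : 0 < k) (hkn : k < n)
    (hx : (k : ℝ) = x * n) :
    binomProb n x k ≤ 1 / √(π * n * x * (1 - x)) := by
  have hn : 0 < (n : ℝ) := by exact_mod_cast hk0.trans hkn
  have hx0 : 0 < x := by
    have : (0 : ℝ) < k := by exact_mod_cast hk0
    nlinarith
  have hx1 : 0 < 1 - x := by
    have : (k : ℝ) < n := by exact_mod_cast hkn
    nlinarith
  have hv : 0 < n * x * (1 - x) := mul_pos (mul_pos hn hx0) hx1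
  have hsq : √(2 / π) / √(2 * n * x * (1 - x)) = 1 / √(π * n * x * (1 - x)) := by
    rw [div_eq_div_iff (by positivity) (by positivity), one_mul, ← sqrt_mul (by positivity)]
    congr 1
    field_simp
  rw [binomProb_self_eq hk0 hkn hx, ← hsq]
  refine div_le_div_of_nonneg_right ?_ (sqrt_nonneg _)
  rw [div_le_iff₀ (mul_pos (stirlingSeq_pos hk0.ne') (stirlingSeq_pos (by omega)))]
  simpa [Nat.add_sub_cancel' hkn.le] using
    stirlingSeq_add_le_mul hk0.ne' (show n - k ≠ 0 by omega)

theorem inv_sqrt_le_binomProb_self {n k : ℕ} {x : ℝ} (hk0 : 0 < k) (hkn : k < n)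
    (hx : (k : ℝ) = x * n) :
    1 / √(8 * n * x * (1 - x)) ≤ binomProb n x k := by
  have hsq : 1 / √(8 * n * x * (1 - x)) = 1 / 2 / √(2 * n * x * (1 - x)) := by
    rw [div_div, show (8 : ℝ) * n * x * (1 - x) = 2 ^ 2 * (2 * n * x * (1 - x)) by ring,
      sqrt_mul (by positivity), sqrt_sq zero_le_two]
  rw [binomProb_self_eq hk0 hkn hx, hsq]
  refine div_le_div_of_nonneg_right ?_ (sqrt_nonneg _)
  rw [le_div_iff₀ (mul_pos (stirlingSeq_pos hk0.ne') (stirlingSeq_pos (by omega)))]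
  have := stirlingSeq_mul_le_two_mul hk0.ne' (show n - k ≠ 0 by omega)
  rw [Nat.add_sub_cancel' hkn.le] at this
  linarith

theorem natCast_pos_and_lt_of_eq_mul {n k : ℕ} {x : ℝ} (hn : 0 < n) (hx0 : 0 < x) (hx1 : x < 1)
    (hk : (k : ℝ) = x * n) : 0 < k ∧ k < n := by
  have hn' : (0 : ℝ) < n := by exact_mod_cast hn
  constructor
  · exact_mod_cast (hk ▸ mul_pos hx0 hn' : (0 : ℝ) < k)
  · exact_mod_cast (hk ▸ (mul_lt_iff_lt_one_left hn').2 hx1 : (k : ℝ) < n)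

theorem mul_one_div_sqrt_pi_mul {n x : ℝ} (hn : 0 < n) (hx0 : 0 < x) (hx1 : x < 1) :
    x * (1 / √(π * n * x * (1 - x))) = √x / (√(π * (1 - x)) * √n) := by
  have hx1' : 0 < 1 - x := by linarith
  rw [show π * n * x * (1 - x) = x * (π * (1 - x)) * n by ring,
    sqrt_mul (by positivity), sqrt_mul hx0.le]
  have : 0 < √x := sqrt_pos.2 hx0
  have : 0 < √(π * (1 - x)) := sqrt_pos.2 (by positivity)
  have : 0 < √n := sqrt_pos.2 hn
  field_simp
  rw [sq_sqrt hx0.le]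

/-- **Tight Chernoff–Hoeffding, upper tail, integral case.** For `0 < p < x < 1` with
`xn` an integer, `2^{-Dkl(x‖p)n}/√(8nx(1-x)) ≤ P[Y ≥ xn] ≤
((1-p)√x)/((x-p)√(π(1-x))) · 2^{-Dkl(x‖p)n}/√n`. -/
theorem chernoff_hoeffding_ge_integral (n : ℕ) (hn : 0 < n) (x p : ℝ)
    (hp0 : 0 < p) (hpx : p < x) (hx1 : x < 1) (hint : ∃ k : ℕ, (k : ℝ) = x * n) :
    (2 : ℝ) ^ (-(dkl x p) * n) / Real.sqrt (8 * n * x * (1 - x)) ≤ binomPGE n p (x * n) ∧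
    binomPGE n p (x * n) ≤
      (1 - p) * Real.sqrt x / ((x - p) * Real.sqrt (Real.pi * (1 - x))) *
        ((2 : ℝ) ^ (-(dkl x p) * n) / Real.sqrt n) := by
  obtain ⟨k, hk⟩ := hint
  have hn' : (0 : ℝ) < n := by exact_mod_cast hn
  have hx0 : 0 < x := hp0.trans hpx
  have hp1 : p < 1 := hpx.trans hx1
  obtain ⟨hk0, hkn⟩ := natCast_pos_and_lt_of_eq_mul hn hx0 hx1 hk
  have hprob := binomProb_eq_two_rpow_neg_dkl_mul hp0 hp1 hx0 hx1 hk hkn.le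
  set D := (2 : ℝ) ^ (-(dkl x p) * n)
  rw [← hk]
  constructor
  · calc D / √(8 * n * x * (1 - x)) = D * (1 / √(8 * n * x * (1 - x))) := by ring
      _ ≤ D * binomProb n x k := by gcongr; exact inv_sqrt_le_binomProb_self hk0 hkn hk
      _ = binomProb n p k := hprob.symm
      _ ≤ binomPGE n p k := binomProb_le_binomPGE hp0.le hp1.le hkn.le
  · have hpk : p * n < k := by rw [hk]; gcongr
    have hxp : x - p ≠ 0 := by linarith
    calc binomPGE n p k ≤ (1 - p) * k / (k - p * n) * binomProb n p k :=
          binomPGE_le hp0.le hp1 hpk hkn.le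
      _ = (1 - p) / (x - p) * D * (x * binomProb n x k) := by
          rw [hprob, hk, ← sub_mul]
          field_simp
      _ ≤ (1 - p) / (x - p) * D * (x * (1 / √(π * n * x * (1 - x)))) := by
          gcongr
          exact binomProb_self_le hk0 hkn hk
      _ = _ := by
          rw [mul_one_div_sqrt_pi_mul hn' hx0 hx1]
          field_simp
end

section
/- Let p and x be probabilities with 0 < p < 1 and p < x < 1, and for each positive integer n let Y_n ~ Bin(n,p). Then there exists a constant C > 0 (depending only on p and x) such that for all positive integers n ≥ 1/(1-x): |(1/n)·ln(P[Y_n ≥ xn]) + Dkl_e(x‖p) + (1/2)·(ln n)/n| ≤ C/n, where Dkl_e(x‖p) = x·ln(x/p) + (1-x)·ln((1-x)/(1-p)) is the natural-logarithm Kullback–Leibler divergence. -/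
/-- Natural-logarithm Kullback–Leibler divergence between Bernoulli distributions. -/
noncomputable def dklE (x p : ℝ) : ℝ :=
  x * Real.log (x / p) + (1 - x) * Real.log ((1 - x) / (1 - p))

open Real Finset
open scoped Nat

namespace Stirling

lemma log_stirlingSeq_nonneg {n : ℕ} (hn : n ≠ 0) : 0 ≤ log (stirlingSeq n) :=
  log_nonneg <| (one_le_sqrt.mpr (by linarith [pi_gt_three])).trans (sqrt_pi_le_stirlingSeq hn)

lemma log_stirlingSeq_le_one {n : ℕ} (hn : n ≠ 0) : log (stirlingSeq n) ≤ 1 := by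
  obtain ⟨m, rfl⟩ := Nat.exists_eq_succ_of_ne_zero hn
  have h : stirlingSeq (m + 1) ≤ exp 1 / √2 :=
    stirlingSeq_one ▸ stirlingSeq'_antitone (Nat.zero_le m)
  calc log (stirlingSeq (m + 1)) ≤ log (exp 1) :=
        log_le_log (stirlingSeq'_pos m)
          (h.trans (div_le_self (exp_pos 1).le (one_le_sqrt.mpr one_le_two)))
    _ = 1 := log_exp 1

lemma log_factorial_eq {n : ℕ} (hn : n ≠ 0) :
    log (n ! : ℝ) = n * log n - n + 1 / 2 * log (2 * n) + log (stirlingSeq n) := by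
  have hn' : (n : ℝ) ≠ 0 := Nat.cast_ne_zero.mpr hn
  rw [log_stirlingSeq_formula, log_div hn' (exp_pos 1).ne', log_exp]
  ring

end Stirling

lemma sum_Ico_le_div_one_sub_of_succ_le_mul {f : ℕ → ℝ} {ρ : ℝ} {k N : ℕ} (hρ0 : 0 ≤ ρ)
    (hρ1 : ρ < 1) (hfk : 0 ≤ f k) (hf : ∀ i, k ≤ i → i + 1 < N → f (i + 1) ≤ ρ * f i) :
    ∑ i ∈ Ico k N, f i ≤ f k / (1 - ρ) := by
  have hgeom : ∀ j, k + j < N → f (k + j) ≤ ρ ^ j * f k := by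
    intro j
    induction j with
    | zero => simp
    | succ j ih =>
      intro hj
      calc f (k + j + 1) ≤ ρ * f (k + j) := hf _ (Nat.le_add_right k j) hj
        _ ≤ ρ * (ρ ^ j * f k) := by gcongr; exact ih (by omega)
        _ = ρ ^ (j + 1) * f k := by ring
  calc ∑ i ∈ Ico k N, f i = ∑ j ∈ range (N - k), f (k + j) := sum_Ico_eq_sum_range f k N
    _ ≤ ∑ j ∈ range (N - k), ρ ^ j * f k :=
        sum_le_sum fun j hj => hgeom j (by rw [mem_range] at hj; omega)
    _ = (∑ j ∈ Ico 0 (N - k), ρ ^ j) * f k := by rw [sum_mul, range_eq_Ico]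
    _ ≤ ρ ^ 0 / (1 - ρ) * f k := by gcongr; exact geom_sum_Ico_le_of_lt_one hρ0 hρ1
    _ = f k / (1 - ρ) := by ring

lemma mul_one_sub_div_mul_lt_one {p x : ℝ} (hp0 : 0 < p) (hpx : p < x) (hx1 : x ≤ 1) :
    p * (1 - x) / ((1 - p) * x) < 1 := by
  have hq : 0 < 1 - p := by linarith
  rw [div_lt_one (mul_pos hq (hp0.trans hpx))]
  nlinarith

noncomputable def binomTerm (n : ℕ) (p : ℝ) (i : ℕ) : ℝ :=
  (n.choose i : ℝ) * p ^ i * (1 - p) ^ (n - i)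

section Binomial

variable {n : ℕ} {p : ℝ}

lemma binomTerm_nonneg (hp0 : 0 ≤ p) (hp1 : p ≤ 1) (i : ℕ) : 0 ≤ binomTerm n p i := by
  have : 0 ≤ 1 - p := by linarith
  unfold binomTerm
  positivity

lemma binomTerm_pos (hp0 : 0 < p) (hp1 : p < 1) {i : ℕ} (hi : i ≤ n) : 0 < binomTerm n p i := by
  have : 0 < 1 - p := by linarith
  have : 0 < n.choose i := Nat.choose_pos hi
  unfold binomTerm
  positivity

lemma binomPGE_eq_sum_Ico (n : ℕ) (p t : ℝ) :
    binomPGE n p t = ∑ i ∈ Ico ⌈t⌉₊ (n + 1), binomTerm n p i := by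
  rw [binomPGE, ← sum_filter]
  congr 1
  ext i
  simp [Nat.ceil_le, and_comm]

lemma binomTerm_succ_mul {i : ℕ} (hi : i < n) :
    binomTerm n p (i + 1) * ((i + 1) * (1 - p)) = binomTerm n p i * ((n - i) * p) := by
  have hchoose : (n.choose (i + 1) : ℝ) * (i + 1) = n.choose i * (n - i) := by
    have h := congrArg (Nat.cast (R := ℝ)) (Nat.choose_succ_right_eq n i)
    push_cast [Nat.cast_sub hi.le] at h
    exact h
  have hpow : (1 - p) ^ (n - i) = (1 - p) ^ (n - (i + 1)) * (1 - p) := by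
    rw [← pow_succ]; congr 1; omega
  simp only [binomTerm, hpow, pow_succ]
  linear_combination p ^ i * p * (1 - p) ^ (n - (i + 1)) * (1 - p) * hchoose

lemma binomTerm_succ_le {x : ℝ} (hp0 : 0 < p) (hp1 : p < 1) (hx0 : 0 < x) {i : ℕ}
    (hxi : x * n ≤ i) (hi : i < n) :
    binomTerm n p (i + 1) ≤ p * (1 - x) / ((1 - p) * x) * binomTerm n p i := by
  have hq : 0 < 1 - p := by linarith
  have hb : 0 ≤ binomTerm n p i := binomTerm_nonneg hp0.le hp1.le i
  have hin : (i : ℝ) < n := by exact_mod_cast hi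
  have hratio : x * (n - i) ≤ (1 - x) * (i + 1) := by nlinarith
  rw [div_mul_eq_mul_div, le_div_iff₀ (by positivity)]
  have h := binomTerm_succ_mul (p := p) hi
  refine le_of_mul_le_mul_right (a := (i + 1 : ℝ)) ?_ (by positivity)
  calc binomTerm n p (i + 1) * ((1 - p) * x) * (i + 1)
      = x * (binomTerm n p i * ((n - i) * p)) := by rw [← h]; ring
    _ ≤ p * (1 - x) * binomTerm n p i * (i + 1) := by nlinarith [mul_nonneg hb hp0.le]

lemma binomTerm_ceil_le_binomPGE {t : ℝ} (hp0 : 0 ≤ p) (hp1 : p ≤ 1) (ht : ⌈t⌉₊ ≤ n) :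
    binomTerm n p ⌈t⌉₊ ≤ binomPGE n p t := by
  rw [binomPGE_eq_sum_Ico]
  exact single_le_sum (fun i _ => binomTerm_nonneg hp0 hp1 i)
    (mem_Ico.mpr ⟨le_rfl, Nat.lt_succ_of_le ht⟩)

lemma binomPGE_le_binomTerm_ceil_div {x : ℝ} (hp0 : 0 < p) (hpx : p < x) (hx1 : x ≤ 1) :
    binomPGE n p (x * n) ≤ binomTerm n p ⌈x * n⌉₊ / (1 - p * (1 - x) / ((1 - p) * x)) := by
  have hp1 : p < 1 := hpx.trans_le hx1
  have hx0 : 0 < x := hp0.trans hpx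
  have hq : 0 < 1 - p := by linarith
  have h1x : 0 ≤ 1 - x := by linarith
  rw [binomPGE_eq_sum_Ico]
  exact sum_Ico_le_div_one_sub_of_succ_le_mul (by positivity)
    (mul_one_sub_div_mul_lt_one hp0 hpx hx1) (binomTerm_nonneg hp0.le hp1.le _)
    fun i hi hiN => binomTerm_succ_le hp0 hp1 hx0 (Nat.ceil_le.mp hi) (by omega)

end Binomial

/-- The tangent-line inequality for the convex function `a ↦ a log (a / c)` at `a`. -/
lemma mul_log_div_sub_mul_log_div_le {a b c : ℝ} (ha : 0 < a) (hb : 0 < b) (hc : c ≠ 0) :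
    a * log (a / c) - b * log (b / c) ≤ (a - b) * (log (a / c) + 1) := by
  have h : b * log (a / b) ≤ a - b := by
    have := log_le_sub_one_of_pos (div_pos ha hb)
    calc b * log (a / b) ≤ b * (a / b - 1) := by gcongr
      _ = a - b := by field_simp
  rw [log_div ha.ne' hb.ne'] at h
  rw [log_div ha.ne' hc, log_div hb.ne' hc]
  linarith

lemma dklE_sub_le {t x p : ℝ} (ht0 : 0 < t) (ht1 : t < 1) (hx0 : 0 < x) (hx1 : x < 1)
    (hp0 : p ≠ 0) (hp1 : p ≠ 1) :
    dklE t p - dklE x p ≤ (t - x) * (log (t / p) - log ((1 - t) / (1 - p))) := by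
  have h1 := mul_log_div_sub_mul_log_div_le ht0 hx0 hp0
  have h2 := mul_log_div_sub_mul_log_div_le (sub_pos.mpr ht1) (sub_pos.mpr hx1)
    (sub_ne_zero.mpr hp1.symm)
  unfold dklE
  linarith

lemma log_div_sub_log_one_sub_div_nonneg {p t : ℝ} (hp0 : 0 < p) (hpt : p ≤ t) (ht1 : t < 1) :
    0 ≤ log (t / p) - log ((1 - t) / (1 - p)) := by
  have h1 : 0 ≤ log (t / p) := log_nonneg ((one_le_div hp0).mpr hpt)
  have h2 : log ((1 - t) / (1 - p)) ≤ 0 :=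
    log_nonpos (div_nonneg (by linarith) (by linarith)) ((div_le_one (by linarith)).mpr
      (by linarith))
  linarith

lemma dklE_le_dklE {p x t : ℝ} (hp0 : 0 < p) (hpx : p ≤ x) (hxt : x ≤ t) (ht1 : t < 1) :
    dklE x p ≤ dklE t p := by
  have hx1 : x < 1 := hxt.trans_lt ht1
  have hp1 : p < 1 := hpx.trans_lt hx1
  have hslope := log_div_sub_log_one_sub_div_nonneg hp0 hpx hx1
  have := dklE_sub_le (hp0.trans_le hpx) hx1 (hp0.trans_le (hpx.trans hxt)) ht1 hp0.ne' hp1.ne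
  linarith [mul_nonneg (sub_nonneg.mpr hxt) hslope]

lemma mul_dklE_sub_le {p x t s : ℝ} (hp0 : 0 < p) (hpx : p ≤ x) (hxt : x ≤ t) (ht1 : t < 1)
    (hs : 0 ≤ s) (hst : s * (t - x) ≤ 1) :
    s * (dklE t p - dklE x p) ≤ log (t / p) - log ((1 - t) / (1 - p)) := by
  have hx0 : 0 < x := hp0.trans_le hpx
  have hp1 : p < 1 := (hpx.trans hxt).trans_lt ht1
  have hslope := log_div_sub_log_one_sub_div_nonneg hp0 (hpx.trans hxt) ht1
  calc s * (dklE t p - dklE x p)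
      ≤ s * ((t - x) * (log (t / p) - log ((1 - t) / (1 - p)))) := by
        gcongr; exact dklE_sub_le (hx0.trans_le hxt) ht1 hx0 (hxt.trans_lt ht1) hp0.ne' hp1.ne
    _ ≤ 1 * (log (t / p) - log ((1 - t) / (1 - p))) := by rw [← mul_assoc]; gcongr
    _ = _ := one_mul _

open Stirling in
lemma log_binomTerm_eq {p : ℝ} {k m n : ℕ} (hk : k ≠ 0) (hm : m ≠ 0) (hkmn : k + m = n)
    (hp0 : 0 < p) (hp1 : p < 1) :
    log (binomTerm n p k) = -(n * dklE (k / n) p) - 1 / 2 * log (2 * k * m / n)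
      + (log (stirlingSeq n) - log (stirlingSeq k) - log (stirlingSeq m)) := by
  subst hkmn
  have hn : k + m ≠ 0 := by omega
  have hk' : (k : ℝ) ≠ 0 := Nat.cast_ne_zero.mpr hk
  have hm' : (m : ℝ) ≠ 0 := Nat.cast_ne_zero.mpr hm
  have hn' : ((k + m : ℕ) : ℝ) ≠ 0 := Nat.cast_ne_zero.mpr hn
  have hq : 1 - p ≠ 0 := by linarith
  have hlogb : log (binomTerm (k + m) p k) = log ((k + m) ! : ℝ) - log (k ! : ℝ)
      - log (m ! : ℝ) + k * log p + m * log (1 - p) := by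
    rw [binomTerm, Nat.add_sub_cancel_left, Nat.cast_add_choose, log_mul (by positivity)
      (by positivity), log_mul (by positivity) (by positivity), log_div (by positivity)
      (by positivity), log_mul (by positivity) (by positivity), log_pow, log_pow]
    ring
  have hD : ((k + m : ℕ) : ℝ) * dklE (k / (k + m : ℕ)) p
      = k * (log k - log (k + m : ℕ) - log p) + m * (log m - log (k + m : ℕ) - log (1 - p)) := by
    have h1 : 1 - (k : ℝ) / (k + m : ℕ) = m / (k + m : ℕ) := by
      field_simp; push_cast; ring
    rw [dklE, h1, log_div (by positivity) hp0.ne', log_div (by positivity) hq,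
      log_div hk' hn', log_div hm' hn']
    field_simp
  have hratio : log (2 * k * m / (k + m : ℕ)) = log 2 + log k + log m - log (k + m : ℕ) := by
    rw [log_div (by positivity) hn', log_mul (by positivity) hm', log_mul two_ne_zero hk']
  have h2 (j : ℕ) (hj : (j : ℝ) ≠ 0) : log (2 * j) = log 2 + log j := log_mul two_ne_zero hj
  rw [hlogb, hD, hratio, log_factorial_eq hn, log_factorial_eq hk, log_factorial_eq hm,
    h2 _ hn', h2 _ hk', h2 _ hm']
  push_cast
  ring

section Ceil

variable {x : ℝ} {n : ℕ}

lemma ceil_mul_pos (hx0 : 0 < x) (hx1 : x < 1) (hn : 1 / (1 - x) ≤ n) : 0 < ⌈x * n⌉₊ := by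
  have : 0 < (n : ℝ) := (one_div_pos.mpr (sub_pos.mpr hx1)).trans_le hn
  exact Nat.ceil_pos.mpr (by positivity)

lemma ceil_mul_sub_lt_one (hx0 : 0 ≤ x) : (⌈x * n⌉₊ : ℝ) - x * n < 1 := by
  have := Nat.ceil_lt_add_one (mul_nonneg hx0 n.cast_nonneg)
  linarith

lemma one_le_mul_one_sub (hx1 : x < 1) (hn : 1 / (1 - x) ≤ n) : 1 ≤ n * (1 - x) := by
  rwa [div_le_iff₀ (sub_pos.mpr hx1)] at hn

lemma ceil_mul_lt (hx0 : 0 ≤ x) (hx1 : x < 1) (hn : 1 / (1 - x) ≤ n) : ⌈x * n⌉₊ < n := by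
  have := ceil_mul_sub_lt_one (n := n) hx0
  have := one_le_mul_one_sub hx1 hn
  exact_mod_cast (show (⌈x * n⌉₊ : ℝ) < n by linarith)

lemma mul_one_sub_div_two_le_sub_ceil (hx0 : 0 ≤ x) (hx1 : x < 1) (hn : 1 / (1 - x) ≤ n) :
    n * (1 - x) / 2 ≤ ((n - ⌈x * n⌉₊ : ℕ) : ℝ) := by
  have hlt := ceil_mul_lt hx0 hx1 hn
  have h1 : (1 : ℝ) ≤ ((n - ⌈x * n⌉₊ : ℕ) : ℝ) := by exact_mod_cast Nat.sub_pos_of_lt hlt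
  have := ceil_mul_sub_lt_one (n := n) hx0
  rw [Nat.cast_sub hlt.le] at h1 ⊢
  rcases le_or_gt (n * (1 - x)) 2 with h | h <;> linarith

end Ceil

lemma log_two_mul_mul_div_sq_mem_Icc {x k m n : ℝ} (hx0 : 0 < x) (hx1 : x < 1) (hk : x * n ≤ k)
    (hm : n * (1 - x) / 2 ≤ m) (hkn : k ≤ n) (hmn : m ≤ n) (hm0 : 0 < m) :
    log (2 * k * m / n ^ 2) ∈ Set.Icc (log (x * (1 - x))) (log 2) := by
  have hn0 : 0 < n := hm0.trans_le hmn
  have hk0 : 0 < k := by nlinarith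
  constructor
  · refine log_le_log (by nlinarith) ?_
    rw [le_div_iff₀ (by positivity)]
    nlinarith [mul_le_mul hk hm (by nlinarith) hk0.le]
  · refine log_le_log (by positivity) ?_
    rw [div_le_iff₀ (by positivity)]
    nlinarith [mul_le_mul hkn hmn hm0.le hn0.le]

open Stirling in
lemma abs_log_binomTerm_ceil_add_le {p x : ℝ} (hp0 : 0 < p) (hpx : p < x) (hx1 : x < 1) {n : ℕ}
    (hn : 1 / (1 - x) ≤ n) :
    |log (binomTerm n p ⌈x * n⌉₊) + n * dklE x p + 1 / 2 * log n| ≤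
      log (1 / p) - log ((1 - x) / (2 * (1 - p))) + 1 / 2 * (log 2 - log (x * (1 - x))) + 2 := by
  have hx0 : 0 < x := hp0.trans hpx
  have hp1 : p < 1 := hpx.trans hx1
  set k := ⌈x * n⌉₊
  set m := n - k
  have hkn : k < n := ceil_mul_lt hx0.le hx1 hn
  have hk : 0 < k := ceil_mul_pos hx0 hx1 hn
  have hm_lb : n * (1 - x) / 2 ≤ (m : ℝ) := mul_one_sub_div_two_le_sub_ceil hx0.le hx1 hn
  have hδ0 : x * n ≤ k := Nat.le_ceil _
  have hδ1 : (k : ℝ) - x * n < 1 := ceil_mul_sub_lt_one hx0.le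
  have hn0 : (0 : ℝ) < n := by exact_mod_cast hk.trans hkn
  have hkm : (k : ℝ) + m = n := by exact_mod_cast Nat.add_sub_of_le hkn.le
  have hm0 : (0 : ℝ) < m := by linarith [one_le_mul_one_sub hx1 hn]
  rw [log_binomTerm_eq hk.ne' (by omega) (Nat.add_sub_of_le hkn.le) hp0 hp1]
  set t : ℝ := k / n
  have hxt : x ≤ t := by rw [le_div_iff₀ hn0]; exact hδ0
  have h1t : 1 - t = m / n := by
    rw [eq_div_iff hn0.ne', sub_mul, div_mul_cancel₀ _ hn0.ne']
    linarith
  have ht1 : t < 1 := by rw [← sub_pos, h1t]; positivity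
  have hKL_lb : 0 ≤ n * (dklE t p - dklE x p) :=
    mul_nonneg hn0.le (sub_nonneg.mpr (dklE_le_dklE hp0 hpx.le hxt ht1))
  have hKL_ub : n * (dklE t p - dklE x p) ≤ log (1 / p) - log ((1 - x) / (2 * (1 - p))) := by
    have hnt : n * (t - x) ≤ 1 := by simp only [t]; field_simp; linarith
    have h1 : log (t / p) ≤ log (1 / p) := log_le_log (by positivity) (by gcongr)
    have h2 : log ((1 - x) / (2 * (1 - p))) ≤ log ((1 - t) / (1 - p)) := by
      refine log_le_log (div_pos (by linarith) (by linarith)) ?_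
      rw [div_le_div_iff₀ (by linarith) (by linarith), h1t, div_mul_eq_mul_div,
        le_div_iff₀ hn0]
      nlinarith
    linarith [mul_dklE_sub_le hp0 hpx.le hxt ht1 hn0.le hnt]
  have hratio : log (2 * k * m / n) - log n ∈ Set.Icc (log (x * (1 - x))) (log 2) := by
    rw [← log_div (by positivity) hn0.ne', div_div, ← sq]
    exact log_two_mul_mul_div_sq_mem_Icc hx0 hx1 hδ0 hm_lb (by linarith) (by linarith) hm0
  have hS {j : ℕ} (hj : j ≠ 0) : log (stirlingSeq j) ∈ Set.Icc 0 1 :=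
    ⟨log_stirlingSeq_nonneg hj, log_stirlingSeq_le_one hj⟩
  obtain ⟨hSn, hSn'⟩ := hS (j := n) (by omega)
  obtain ⟨hSk, hSk'⟩ := hS (j := k) (by omega)
  obtain ⟨hSm, hSm'⟩ := hS (j := m) (by omega)
  have hlog2 : 0 ≤ log 2 := log_nonneg one_le_two
  have hlogx : log (x * (1 - x)) ≤ 0 := log_nonpos (by nlinarith) (by nlinarith)
  rw [abs_le]
  constructor <;> linarith [hratio.1, hratio.2]

lemma exists_abs_log_binomPGE_add_le {p x : ℝ} (hp0 : 0 < p) (hpx : p < x) (hx1 : x < 1) :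
    ∃ C, ∀ n : ℕ, 1 / (1 - x) ≤ n →
      |log (binomPGE n p (x * n)) + n * dklE x p + 1 / 2 * log n| ≤ C := by
  have hx0 : 0 < x := hp0.trans hpx
  have hp1 : p < 1 := hpx.trans hx1
  set ρ := p * (1 - x) / ((1 - p) * x)
  have hρ0 : 0 ≤ ρ := div_nonneg (mul_nonneg hp0.le (by linarith)) (mul_nonneg (by linarith)
    hx0.le)
  have hρ1 : 0 < 1 - ρ := sub_pos.mpr (mul_one_sub_div_mul_lt_one hp0 hpx hx1.le)
  have hlogρ : log (1 - ρ) ≤ 0 := log_nonpos hρ1.le (by linarith)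
  refine ⟨-log (1 - ρ) + (log (1 / p) - log ((1 - x) / (2 * (1 - p)))
    + 1 / 2 * (log 2 - log (x * (1 - x))) + 2), fun n hn => ?_⟩
  have hkn : ⌈x * n⌉₊ < n := ceil_mul_lt hx0.le hx1 hn
  have hb := binomTerm_pos (n := n) hp0 hp1 hkn.le
  have hlow := binomTerm_ceil_le_binomPGE hp0.le hp1.le hkn.le
  have hup := binomPGE_le_binomTerm_ceil_div (n := n) hp0 hpx hx1.le
  have hlog_low := log_le_log hb hlow
  have hlog_up := log_le_log (hb.trans_le hlow) hup
  rw [log_div hb.ne' hρ1.ne'] at hlog_up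
  have hmain := abs_log_binomTerm_ceil_add_le hp0 hpx hx1 hn
  rw [abs_le] at hmain ⊢
  constructor <;> linarith [hmain.1, hmain.2]

/-- **Rate of convergence in Cramér's theorem for Bernoulli variables.** For
`0 < p < x < 1` there is `C > 0` with
`|(1/n)·ln P[Y_n ≥ xn] + Dkl_e(x‖p) + (1/2)(ln n)/n| ≤ C/n` for all `n ≥ 1/(1-x)`. -/
theorem cramer_rate (p x : ℝ) (hp0 : 0 < p) (hpx : p < x) (hx1 : x < 1) :
    ∃ C > (0 : ℝ), ∀ n : ℕ, 0 < n → 1 / (1 - x) ≤ (n : ℝ) →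
      |(1 / n) * Real.log (binomPGE n p (x * n)) + dklE x p +
          (1 / 2) * Real.log n / n| ≤ C / n := by
  obtain ⟨C, hC⟩ := exists_abs_log_binomPGE_add_le hp0 hpx hx1
  refine ⟨max C 1, lt_max_of_lt_right one_pos, fun n hn hnx => ?_⟩
  have hn0 : (0 : ℝ) < n := by exact_mod_cast hn
  have hscale : 1 / n * log (binomPGE n p (x * n)) + dklE x p + 1 / 2 * log n / n
      = (log (binomPGE n p (x * n)) + n * dklE x p + 1 / 2 * log n) / n := by
    field_simp
  rw [hscale, abs_div, abs_of_pos hn0]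
  exact div_le_div_of_nonneg_right ((hC n hnx).trans (le_max_left C 1)) hn0.le
end

section
/- Let 0 < p < 1 be a probability and n, m positive integers. Then the expected size of the minimization satisfies E[|min(B_{n,m,p})|] ≥ Σ_{i=0}^{n} C(n,i) · (1 - (1 - p^i·(1-p)^{n-i})^m) · (1 - (1-p)^{n-i}·(1-p^i))^m. -/
/-!
A set `S` is a minimal edge iff no sample is a proper subset of `S` while some sample is
contained in `S` (and then equals it). With `c = P(X ⊆ S) = (1-p)^{n-|S|}` and
`q = P(X = S)`, independence gives `P(S minimal) = (1 - (c - q))^m - (1 - c)^m`, and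
linearity of expectation sums this over all `S`, grouped by `|S|`. The bound follows termwise
from `1 - c ≤ (1 - q)(1 - (c - q))`.
-/

open MeasureTheory

/-- The Bernoulli(p) measure on `Bool`. -/
noncomputable def bernoulliBool (p : ℝ) : Measure Bool :=
  ENNReal.ofReal p • Measure.dirac true + ENNReal.ofReal (1 - p) • Measure.dirac false

instance (p : ℝ) : IsFiniteMeasure (bernoulliBool p) := by
  constructor
  rw [bernoulliBool]
  simp [ENNReal.add_lt_top]

/-- The law of `m` i.i.d. random subsets of `{1,…,n}` (encoded as indicator vectors),
each element included independently with probability `p`. -/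
noncomputable def hyperMeasure (n m : ℕ) (p : ℝ) : Measure (Fin m → Fin n → Bool) :=
  Measure.pi fun _ : Fin m => Measure.pi fun _ : Fin n => bernoulliBool p

/-- The subset of `Fin n` encoded by an indicator vector. -/
def toSet {n : ℕ} (f : Fin n → Bool) : Finset (Fin n) :=
  Finset.univ.filter fun i => f i = true

/-- The number of distinct minimal edges of the sampled multi-hypergraph:
sets `S` that occur among the samples and such that no sample is a proper subset of `S`. -/
def minCount (n m : ℕ) (ω : Fin m → Fin n → Bool) : ℕ :=
  (Finset.univ.filter fun S : Finset (Fin n) =>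
    (∃ j, toSet (ω j) = S) ∧ ∀ k, ¬ toSet (ω k) ⊂ S).card

/-- Expected size of the minimization of `B_{n,m,p}`. -/
noncomputable def expMin (n m : ℕ) (p : ℝ) : ℝ :=
  ∫ ω, (minCount n m ω : ℝ) ∂(hyperMeasure n m p)

open Finset

theorem Fintype.prod_ite_mem_const {ι M : Type*} [Fintype ι] [DecidableEq ι] [CommMonoid M]
    (S : Finset ι) (a b : M) :
    ∏ x, (if x ∈ S then a else b) = a ^ #S * b ^ (Fintype.card ι - #S) := by
  rw [Finset.prod_ite, prod_const, prod_const, filter_mem_eq_inter, univ_inter, filter_not,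
    filter_mem_eq_inter, univ_inter, card_sdiff_of_subset (subset_univ S), card_univ]

theorem MeasureTheory.Measure.real_pi_pi {ι : Type*} [Fintype ι] {α : ι → Type*}
    [∀ i, MeasurableSpace (α i)] (μ : ∀ i, Measure (α i)) [∀ i, SigmaFinite (μ i)]
    (s : ∀ i, Set (α i)) : (Measure.pi μ).real (Set.univ.pi s) = ∏ i, (μ i).real (s i) := by
  simp [measureReal_def, Measure.pi_pi, ENNReal.toReal_prod]

open Classical in
theorem MeasureTheory.integral_card_filter_mem {Ω α : Type*} [MeasurableSpace Ω] [Fintype α]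
    (μ : Measure Ω) [IsFiniteMeasure μ] (E : α → Set Ω) (hE : ∀ a, MeasurableSet (E a)) :
    ∫ ω, (#{a | ω ∈ E a} : ℝ) ∂μ = ∑ a, μ.real (E a) := by
  have hcount (ω : Ω) : (#{a | ω ∈ E a} : ℝ) = ∑ a, (E a).indicator 1 ω := by
    simp [Set.indicator_apply]
  simp_rw [hcount]
  rw [integral_finsetSum _ fun a _ => (integrable_const 1).indicator (hE a)]
  simp [integral_indicator_one (hE _)]

section Bernoulli

variable {p : ℝ}

theorem isProbabilityMeasure_bernoulliBool (h0 : 0 ≤ p) (h1 : p ≤ 1) :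
    IsProbabilityMeasure (bernoulliBool p) :=
  ⟨by simp [bernoulliBool, ← ENNReal.ofReal_add h0 (sub_nonneg.2 h1)]⟩

theorem bernoulliBool_real_true (h0 : 0 ≤ p) : (bernoulliBool p).real {true} = p := by
  simp [bernoulliBool, measureReal_def, h0]

theorem bernoulliBool_real_false (h1 : p ≤ 1) : (bernoulliBool p).real {false} = 1 - p := by
  simp [bernoulliBool, measureReal_def, h1]

end Bernoulli

noncomputable abbrev edgeLaw (n : ℕ) (p : ℝ) : Measure (Fin n → Bool) :=
  Measure.pi fun _ => bernoulliBool p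

section EdgeLaw

variable {n : ℕ} {p : ℝ}

theorem setOf_toSet_subset (S : Finset (Fin n)) :
    {f : Fin n → Bool | toSet f ⊆ S} =
      Set.univ.pi fun x => if x ∈ S then Set.univ else {false} := by
  ext f
  simp only [Set.mem_ofPred_eq, Set.mem_univ_pi, toSet, Finset.subset_iff, Finset.mem_filter,
    Finset.mem_univ, true_and]
  refine forall_congr' fun x => ?_
  by_cases hx : x ∈ S <;> simp [hx]

theorem setOf_toSet_eq (S : Finset (Fin n)) :
    {f : Fin n → Bool | toSet f = S} = Set.univ.pi fun x => {decide (x ∈ S)} := by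
  ext f
  simp only [Set.mem_ofPred_eq, Set.mem_univ_pi, Finset.ext_iff, toSet, Finset.mem_filter,
    Finset.mem_univ, true_and]
  refine forall_congr' fun x => ?_
  by_cases hx : x ∈ S <;> simp [hx]

theorem edgeLaw_real_toSet_subset (h0 : 0 ≤ p) (h1 : p ≤ 1) (S : Finset (Fin n)) :
    (edgeLaw n p).real {f | toSet f ⊆ S} = (1 - p) ^ (n - #S) := by
  have := isProbabilityMeasure_bernoulliBool h0 h1
  simp_rw [setOf_toSet_subset, Measure.real_pi_pi, apply_ite, probReal_univ,
    bernoulliBool_real_false h1, Fintype.prod_ite_mem_const, one_pow, one_mul, Fintype.card_fin]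

theorem edgeLaw_real_toSet_eq (h0 : 0 ≤ p) (h1 : p ≤ 1) (S : Finset (Fin n)) :
    (edgeLaw n p).real {f | toSet f = S} = p ^ #S * (1 - p) ^ (n - #S) := by
  have hx (x : Fin n) :
      (bernoulliBool p).real {decide (x ∈ S)} = if x ∈ S then p else 1 - p := by
    split_ifs with hx <;> simp [hx, bernoulliBool_real_true h0, bernoulliBool_real_false h1]
  simp_rw [setOf_toSet_eq, Measure.real_pi_pi, hx, Fintype.prod_ite_mem_const, Fintype.card_fin]

theorem edgeLaw_real_toSet_ssubset (h0 : 0 ≤ p) (h1 : p ≤ 1) (S : Finset (Fin n)) :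
    (edgeLaw n p).real {f | toSet f ⊂ S} = (1 - p) ^ (n - #S) * (1 - p ^ #S) := by
  have hsdiff : {f : Fin n → Bool | toSet f ⊂ S} = {f | toSet f ⊆ S} \ {f | toSet f = S} := by
    ext f
    simp [Finset.ssubset_iff_subset_ne]
  have hsub : {f : Fin n → Bool | toSet f = S} ⊆ {f | toSet f ⊆ S} :=
    fun f (hf : toSet f = S) => hf.subset
  rw [hsdiff, measureReal_sdiff hsub (Set.toFinite _).measurableSet,
    edgeLaw_real_toSet_subset h0 h1, edgeLaw_real_toSet_eq h0 h1]
  ring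

end EdgeLaw

instance (n m : ℕ) (p : ℝ) : IsFiniteMeasure (hyperMeasure n m p) := by
  unfold hyperMeasure
  infer_instance

def minimalEvent (n m : ℕ) (S : Finset (Fin n)) : Set (Fin m → Fin n → Bool) :=
  {ω | (∃ j, toSet (ω j) = S) ∧ ∀ k, ¬ toSet (ω k) ⊂ S}

section MinimalEvent

variable {n m : ℕ} {p : ℝ}

theorem minimalEvent_eq_pi_sdiff_pi (S : Finset (Fin n)) :
    minimalEvent n m S = (Set.univ.pi fun _ => {f | toSet f ⊂ S}ᶜ) \
      Set.univ.pi fun _ => {f | toSet f ⊆ S}ᶜ := by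
  ext ω
  simp only [minimalEvent, Set.mem_ofPred_eq, Set.mem_sdiff, Set.mem_univ_pi, Set.mem_compl_iff,
    not_forall, not_not]
  constructor
  · rintro ⟨⟨j, hj⟩, hk⟩
    exact ⟨hk, j, hj.subset⟩
  · rintro ⟨hk, j, hj⟩
    exact ⟨⟨j, not_not.1 fun hne => hk j (hj.ssubset_of_ne hne)⟩, hk⟩

theorem hyperMeasure_real_minimalEvent (h0 : 0 ≤ p) (h1 : p ≤ 1) (S : Finset (Fin n)) :
    (hyperMeasure n m p).real (minimalEvent n m S) =
      (1 - (1 - p) ^ (n - #S) * (1 - p ^ #S)) ^ m - (1 - (1 - p) ^ (n - #S)) ^ m := by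
  have := isProbabilityMeasure_bernoulliBool h0 h1
  have hsub : (Set.univ.pi fun _ : Fin m => {f : Fin n → Bool | toSet f ⊆ S}ᶜ) ⊆
      Set.univ.pi fun _ => {f | toSet f ⊂ S}ᶜ :=
    Set.pi_mono fun _ _ f hf (hss : toSet f ⊂ S) => hf hss.subset
  rw [minimalEvent_eq_pi_sdiff_pi, hyperMeasure,
    measureReal_sdiff hsub (Set.toFinite _).measurableSet]
  simp_rw [Measure.real_pi_pi]
  rw [probReal_compl_eq_one_sub (Set.toFinite _).measurableSet,
    probReal_compl_eq_one_sub (Set.toFinite _).measurableSet, edgeLaw_real_toSet_ssubset h0 h1,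
    edgeLaw_real_toSet_subset h0 h1]
  simp

open Classical in
theorem expMin_eq_sum_range (h0 : 0 ≤ p) (h1 : p ≤ 1) :
    expMin n m p = ∑ i ∈ range (n + 1),
      n.choose i * ((1 - (1 - p) ^ (n - i) * (1 - p ^ i)) ^ m - (1 - (1 - p) ^ (n - i)) ^ m) := by
  have hcount : minCount n m = fun ω => #{S | ω ∈ minimalEvent n m S} := by
    ext ω; unfold minCount minimalEvent; congr
  rw [expMin, hcount, integral_card_filter_mem _ _ fun _ => (Set.toFinite _).measurableSet]
  simp_rw [hyperMeasure_real_minimalEvent h0 h1]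
  rw [← Finset.powerset_univ, Finset.sum_powerset_apply_card
    (fun i => (1 - (1 - p) ^ (n - i) * (1 - p ^ i)) ^ m - (1 - (1 - p) ^ (n - i)) ^ m),
    card_univ, Fintype.card_fin]
  simp [nsmul_eq_mul]

end MinimalEvent

theorem one_sub_one_sub_pow_mul_le {b q : ℝ} (hb : 0 ≤ b) (hq : 0 ≤ q) (hbq : b + q ≤ 1)
    (m : ℕ) : (1 - (1 - q) ^ m) * (1 - b) ^ m ≤ (1 - b) ^ m - (1 - (b + q)) ^ m := by
  have hle : (1 - (b + q)) ^ m ≤ ((1 - q) * (1 - b)) ^ m :=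
    pow_le_pow_left₀ (by linarith) (by nlinarith) m
  rw [mul_pow] at hle
  linarith

theorem expMin_lower_bound_general (p : ℝ) (hp0 : 0 < p) (hp1 : p < 1)
    (n m : ℕ) :
    ∑ i ∈ Finset.range (n + 1),
        (n.choose i : ℝ) * (1 - (1 - p ^ i * (1 - p) ^ (n - i)) ^ m) *
          (1 - (1 - p) ^ (n - i) * (1 - p ^ i)) ^ m ≤ expMin n m p := by
  rw [expMin_eq_sum_range hp0.le hp1.le]
  refine Finset.sum_le_sum fun i _ => ?_
  rw [mul_assoc]
  gcongr
  have hb : 0 ≤ (1 - p) ^ (n - i) * (1 - p ^ i) :=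
    mul_nonneg (pow_nonneg (by linarith) _) (sub_nonneg.2 (pow_le_one₀ hp0.le hp1.le))
  have hq : 0 ≤ p ^ i * (1 - p) ^ (n - i) := by positivity
  have hbq : (1 - p) ^ (n - i) * (1 - p ^ i) + p ^ i * (1 - p) ^ (n - i) = (1 - p) ^ (n - i) := by
    ring
  have hc : (1 - p) ^ (n - i) ≤ 1 := pow_le_one₀ (by linarith) (by linarith)
  simpa only [hbq] using one_sub_one_sub_pow_mul_le hb hq (hbq.trans_le hc) m

/-- **Lower bound on the expected size of the minimization.**
`E[|min(B_{n,m,p})|] ≥ Σ_{i=0}^n C(n,i)·(1-(1-p^i(1-p)^{n-i})^m)·(1-(1-p)^{n-i}(1-p^i))^m`. -/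
theorem expMin_lower_bound (p : ℝ) (hp0 : 0 < p) (hp1 : p < 1)
    (n m : ℕ) (hn : 0 < n) (hm : 0 < m) :
    ∑ i ∈ Finset.range (n + 1),
        (n.choose i : ℝ) * (1 - (1 - p ^ i * (1 - p) ^ (n - i)) ^ m) *
          (1 - (1 - p) ^ (n - i) * (1 - p ^ i)) ^ m ≤ expMin n m p :=
  expMin_lower_bound_general p hp0 hp1 n m
end
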